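/- Components of the m-fold product applied to the first basis vector: with U_n^{σ} the one-step matrices of the repeated-interaction model and e = (1,0,…,0) ∈ ℂ^{N+1}, for m ≤ N one has (U₁^σ⋯U_m^σ e)₀ = c^m (gz)^m, (U₁^σ⋯U_m^σ e)_k = c^m · g w (gz)^{m-k} for 1 ≤ k ≤ m, and 0 for m < k ≤ N, where c = e^{iτε}, g = g^σ(τ), z = z^σ(τ), w = w^σ(τ). -/

import Mathlib

/-! The columns of `U_n` are explicit: `U_n e_0 = c g z e_0 + c g w e_n`, and `U_n e_t = c e_t`
for `t ∉ {0, n}`. Hence `U_1 ⋯ U_m` acts as `c^m` on every `e_t` with `t > m`, and applying it to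
`U_{m+1} e_0 = c g z e_0 + c g w e_{m+1}` multiplies the old components by `c g z` and adds the
new component `c^{m+1} g w` at position `m + 1`. -/

/-- The one-step evolution matrix `U_n^σ` of size `(N+1)×(N+1)`:
row 0 is `c·g·(zδ_{j0} + wδ_{jn})`, row `n` is `c·g·(wδ_{j0} + z⁻δ_{jn})`,
all other rows are `c·δ_{ij}`. -/
def Umat (N n : ℕ) (c g w z zm : ℂ) : Matrix (Fin (N + 1)) (Fin (N + 1)) ℂ :=
  fun i j =>
    if (i : ℕ) = 0 then
      c * g * ((if (j : ℕ) = 0 then z else 0) + (if (j : ℕ) = n then w else 0))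
    else if (i : ℕ) = n then
      c * g * ((if (j : ℕ) = 0 then w else 0) + (if (j : ℕ) = n then zm else 0))
    else if i = j then c else 0

def UmatProd (N m : ℕ) (c g w z zm : ℂ) : Matrix (Fin (N + 1)) (Fin (N + 1)) ℂ :=
  ((List.range m).map (fun n => Umat N (n + 1) c g w z zm)).prod

section

open Matrix

variable {N : ℕ} {c g w z zm : ℂ}

lemma UmatProd_succ (m : ℕ) :
    UmatProd N (m + 1) c g w z zm = UmatProd N m c g w z zm * Umat N (m + 1) c g w z zm :=
  List.prod_range_succ _ m

lemma Umat_mulVec_single_zero {n : ℕ} {t : Fin (N + 1)} (ht : (t : ℕ) = n) (hn : n ≠ 0) :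
    Umat N n c g w z zm *ᵥ Pi.single 0 1
      = (c * g * z) • Pi.single 0 1 + (c * g * w) • Pi.single t 1 := by
  ext i
  simp only [mulVec_single_one, col_apply, Umat, Pi.add_apply, Pi.smul_apply, Pi.single_apply,
    Fin.ext_iff, Fin.val_zero, smul_eq_mul, ht]
  split_ifs <;> simp_all

lemma Umat_mulVec_single_of_ne {n : ℕ} {t : Fin (N + 1)} (h0 : (t : ℕ) ≠ 0) (hn : (t : ℕ) ≠ n) :
    Umat N n c g w z zm *ᵥ Pi.single t 1 = c • Pi.single t 1 := by
  ext i
  simp only [mulVec_single_one, col_apply, Umat, Pi.smul_apply, Pi.single_apply, smul_eq_mul]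
  split_ifs <;> simp_all

lemma UmatProd_mulVec_single_of_lt {m : ℕ} {t : Fin (N + 1)} (ht : m < t) :
    UmatProd N m c g w z zm *ᵥ Pi.single t 1 = c ^ m • Pi.single t 1 := by
  induction m with
  | zero => simp [UmatProd, -mulVec_single]
  | succ m ih =>
    rw [UmatProd_succ, ← mulVec_mulVec, Umat_mulVec_single_of_ne (by omega) (by omega),
      mulVec_smul, ih (by omega), smul_smul, pow_succ']

lemma UmatProd_mulVec_single_zero {m : ℕ} (hmN : m ≤ N) :
    UmatProd N m c g w z zm *ᵥ Pi.single 0 1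
      = fun k : Fin (N + 1) => if (k : ℕ) = 0 then c ^ m * (g * z) ^ m
          else if (k : ℕ) ≤ m then c ^ m * g * w * (g * z) ^ (m - (k : ℕ))
          else 0 := by
  induction m with
  | zero =>
    ext k
    simp +contextual [UmatProd, Pi.single_apply, -mulVec_single]
  | succ m ih =>
    let t : Fin (N + 1) := ⟨m + 1, by omega⟩
    rw [UmatProd_succ, ← mulVec_mulVec, Umat_mulVec_single_zero (t := t) rfl m.succ_ne_zero,
      mulVec_add, mulVec_smul, mulVec_smul, ih (by omega),
      UmatProd_mulVec_single_of_lt (t := t) m.lt_succ_self]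
    ext k
    simp only [Pi.add_apply, Pi.smul_apply, Pi.single_apply, Fin.ext_iff, smul_eq_mul, t]
    split_ifs <;> try omega
    · ring
    · rw [show m + 1 - (k : ℕ) = m - k + 1 by omega]
      ring
    · rw [show m + 1 - (k : ℕ) = 0 by omega]
      ring
    · ring

end

theorem Umat_prod_basis_general (N m : ℕ) (hmN : m ≤ N)
    (c g w z zm : ℂ) (k : Fin (N + 1)) :
    Matrix.mulVec (((List.range m).map (fun n => Umat N (n + 1) c g w z zm)).prod)
        (fun j => if (j : ℕ) = 0 then 1 else 0) k
      = if (k : ℕ) = 0 then c ^ m * (g * z) ^ m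
        else if (k : ℕ) ≤ m then c ^ m * g * w * (g * z) ^ (m - (k : ℕ))
        else 0 := by
  have he : (fun j : Fin (N + 1) => if (j : ℕ) = 0 then (1 : ℂ) else 0) = Pi.single 0 1 := by
    ext j
    simp [Pi.single_apply]
  rw [he]
  exact congrFun (UmatProd_mulVec_single_zero hmN) k

/-- the components of `U₁^σ⋯U_m^σ e` for `e = (1,0,…,0)` are
`c^m(gz)^m` at position 0, `c^m gw(gz)^{m-k}` at positions `1 ≤ k ≤ m`,
and `0` at positions `m < k ≤ N`. -/
theorem Umat_prod_basis (N m : ℕ) (hm : 1 ≤ m) (hmN : m ≤ N)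
    (c g w z zm : ℂ) (k : Fin (N + 1)) :
    Matrix.mulVec (((List.range m).map (fun n => Umat N (n + 1) c g w z zm)).prod)
        (fun j => if (j : ℕ) = 0 then 1 else 0) k
      = if (k : ℕ) = 0 then c ^ m * (g * z) ^ m
        else if (k : ℕ) ≤ m then c ^ m * g * w * (g * z) ^ (m - (k : ℕ))
        else 0 :=
  Umat_prod_basis_general N m hmN c g w z zm k
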